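/- Let Φ be a minimal homeomorphism of a Cantor space S₀ and let S₀ ⊇ S₁ ⊇ S₂ ⊇ ⋯ be a nested sequence of nonempty clopen subsets. For each n let Φ_n : S_n → S_n be the induced first return map of Φ on S_n (with Φ₀ = Φ), and define t_n : S_{n+1} → S_n by t_n(y) = Φ_n^{σ_n(y)−1}(y), where σ_n(y) = min{m ≥ 1 : Φ_n^m(y) ∈ S_{n+1}}. Then for all n, k ∈ ℕ: (t_n ∘ t_{n+1} ∘ ⋯ ∘ t_{n+k})({y ∈ S_{n+k+1} : Φ_{n+k+1}(y) ∈ S_{n+k+2}}) = {z ∈ S_n : Φ_n(z) ∈ S_{n+k+2}}. -/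

import Mathlib

open Set

/-- First return time of `Φ` to the set `T`: `min {n ≥ 1 | Φⁿ(y) ∈ T}`. -/
noncomputable def retTime {S : Type*} (Φ : S → S) (T : Set S) (y : S) : ℕ :=
  sInf {n : ℕ | 1 ≤ n ∧ Φ^[n] y ∈ T}

/-- Induced (first return) map of `Φ` on the set `T`: `y ↦ Φ^{retTime}(y)`. -/
noncomputable def indMap {S : Type*} (Φ : S → S) (T : Set S) (y : S) : S :=
  Φ^[retTime Φ T y] y

/-- A homeomorphism is *minimal* if every orbit is dense. -/
def Homeomorph.IsMinimal {S : Type*} [TopologicalSpace S] (Φ : S ≃ₜ S) : Prop :=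
  ∀ x : S, Dense {y : S | ∃ n : ℕ, (⇑Φ)^[n] x = y ∨ (⇑Φ.symm)^[n] x = y}

/-- The map `t_n : S_{n+1} → S_n`, `t_n(y) = Φ_n^{σ_n(y)−1}(y)`, where `Φ_n` is the induced
first return map of `Φ` on `A n` and `σ_n` is the first return time of `Φ_n` to `A (n+1)`. -/
noncomputable def tMap {S : Type*} (Φ : S → S) (A : ℕ → Set S) (n : ℕ) (y : S) : S :=
  (indMap Φ (A n))^[retTime (indMap Φ (A n)) (A (n + 1)) y - 1] y

/-- The composition `t_n ∘ t_{n+1} ∘ ⋯ ∘ t_{n+k}`. -/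
noncomputable def tComp {S : Type*} (Φ : S → S) (A : ℕ → Set S) (n : ℕ) : ℕ → S → S
  | 0 => tMap Φ A n
  | k + 1 => tMap Φ A n ∘ tComp Φ A (n + 1) k

/-! By compactness and minimality of `Φ` and `Φ⁻¹`, every point returns to every nonempty open set
in both time directions. `t_n` is the last visit to `S_n` before the first return to `S_{n+1}`, so
`Φ_n ∘ t_n = Φ_{n+1}` on `S_{n+1}`, because inducing twice is inducing once. Since `Φ_n` is
injective on `S_n` and `Φ_{n+1}` maps `S_{n+1}` onto itself (run `Φ⁻¹` back to `S_{n+1}`), this gives `t_n (Φ_{n+1}⁻¹ B) = Φ_n⁻¹ B` inside the slices for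
every `B ⊆ S_{n+1}`; the theorem follows by induction on `k`. -/

open Function

section FirstReturn

variable {S : Type*} {f : S → S} {T T' : Set S}

def ReturnsTo (f : S → S) (T : Set S) : Prop :=
  ∀ y, ∃ m, 1 ≤ m ∧ f^[m] y ∈ T

lemma one_le_retTime (h : ReturnsTo f T) (y : S) : 1 ≤ retTime f T y :=
  (Nat.sInf_mem (h y)).1

lemma indMap_mem (h : ReturnsTo f T) (y : S) : indMap f T y ∈ T :=
  (Nat.sInf_mem (h y)).2

lemma retTime_le {y : S} {m : ℕ} (h1 : 1 ≤ m) (hm : f^[m] y ∈ T) : retTime f T y ≤ m :=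
  Nat.sInf_le ⟨h1, hm⟩

lemma iterate_notMem_of_lt_retTime {y : S} {j : ℕ} (h1 : 1 ≤ j) (hj : j < retTime f T y) :
    f^[j] y ∉ T :=
  fun hm => Nat.notMem_of_lt_sInf hj ⟨h1, hm⟩

lemma retTime_eq_of_forall_notMem {y : S} {m : ℕ} (h1 : 1 ≤ m) (hm : f^[m] y ∈ T)
    (hlt : ∀ j, 1 ≤ j → j < m → f^[j] y ∉ T) : retTime f T y = m := by
  have hspec := Nat.sInf_mem (s := {n | 1 ≤ n ∧ f^[n] y ∈ T}) ⟨m, h1, hm⟩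
  exact le_antisymm (retTime_le h1 hm) (not_lt.1 fun hlt' => hlt _ hspec.1 hlt' hspec.2)

lemma retTime_iterate_of_lt (h : ReturnsTo f T) {y : S} {k : ℕ} (hk : k < retTime f T y) :
    retTime f T (f^[k] y) = retTime f T y - k := by
  refine retTime_eq_of_forall_notMem (by omega) ?_ fun j hj1 hj2 => ?_
  · rw [← iterate_add_apply, Nat.sub_add_cancel hk.le]
    exact indMap_mem h y
  · rw [← iterate_add_apply]
    exact iterate_notMem_of_lt_retTime (by omega) (by omega)

lemma indMap_iterate_of_lt (h : ReturnsTo f T) {y : S} {k : ℕ} (hk : k < retTime f T y) :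
    indMap f T (f^[k] y) = indMap f T y := by
  rw [indMap, retTime_iterate_of_lt h hk, ← iterate_add_apply, Nat.sub_add_cancel hk.le, indMap]

lemma apply_iterate_pred_retTime (h : ReturnsTo f T) (y : S) :
    f (f^[retTime f T y - 1] y) = indMap f T y := by
  rw [← iterate_succ_apply' f, Nat.succ_eq_add_one, Nat.sub_add_cancel (one_le_retTime h y)]
  rfl

lemma iterate_indMap_mem (h : ReturnsTo f T) {y : S} (hy : y ∈ T) (m : ℕ) :
    (indMap f T)^[m] y ∈ T :=
  MapsTo.iterate (fun x _ => indMap_mem h x) m hy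

lemma indMap_injOn (hf : Injective f) (h : ReturnsTo f T) : InjOn (indMap f T) T := by
  suffices key : ∀ z₁ ∈ T, ∀ z₂, retTime f T z₁ ≤ retTime f T z₂ →
      indMap f T z₁ = indMap f T z₂ → z₁ = z₂ by
    intro z₁ h₁ z₂ h₂ he
    rcases le_total (retTime f T z₁) (retTime f T z₂) with hle | hle
    · exact key z₁ h₁ z₂ hle he
    · exact (key z₂ h₂ z₁ hle he.symm).symm
  intro z₁ h₁ z₂ hle he
  have hz₁ : z₁ = f^[retTime f T z₂ - retTime f T z₁] z₂ := by
    refine hf.iterate (retTime f T z₁) ?_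
    rw [← iterate_add_apply, Nat.add_sub_cancel' hle]
    exact he
  rcases hle.eq_or_lt with heq | hlt
  · rwa [heq, Nat.sub_self, iterate_zero_apply] at hz₁
  · have := one_le_retTime h z₁
    exact absurd (hz₁ ▸ h₁) (iterate_notMem_of_lt_retTime (by omega) (by omega))

lemma surjOn_indMap {g : S → S} (hfg : LeftInverse f g) (h : ReturnsTo g T) :
    SurjOn (indMap f T) T T := by
  intro w hw
  set k := retTime g T w
  have hk := one_le_retTime h w
  have hback : ∀ j ≤ k, f^[j] (g^[k] w) = g^[k - j] w := fun j hj => by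
    rw [← Nat.add_sub_cancel' hj, iterate_add_apply, (hfg.iterate j) _, Nat.add_sub_cancel_left]
  have hret : retTime f T (g^[k] w) = k := by
    refine retTime_eq_of_forall_notMem hk ?_ fun j hj1 hj2 => ?_
    · rwa [hback k le_rfl, Nat.sub_self]
    · rw [hback j hj2.le]
      exact iterate_notMem_of_lt_retTime (by omega) (by omega)
  refine ⟨g^[k] w, indMap_mem h w, ?_⟩
  rw [indMap, hret, hback k le_rfl, Nat.sub_self, iterate_zero_apply]

lemma exists_iterate_indMap_eq_indMap (hsub : T' ⊆ T) (h : ReturnsTo f T)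
    (h' : ReturnsTo f T') (y : S) :
    ∃ m, 1 ≤ m ∧ (indMap f T)^[m] y = indMap f T' y ∧
      ∀ j, 1 ≤ j → j < m → (indMap f T)^[j] y ∉ T' := by
  obtain ⟨N, hN⟩ : ∃ N, retTime f T' y = N := ⟨_, rfl⟩
  induction N using Nat.strong_induction_on generalizing y with
  | _ N ih =>
  have hr : retTime f T y ≤ N := hN ▸ retTime_le (one_le_retTime h' y) (hsub (indMap_mem h' y))
  rcases hr.eq_or_lt with heq | hlt
  · refine ⟨1, le_rfl, ?_, fun j hj1 hj2 => absurd hj2 (by omega)⟩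
    rw [iterate_one, indMap, indMap, heq, hN]
  · have hr1 := one_le_retTime h y
    obtain ⟨m, hm1, hm, hbefore⟩ := ih _ (by omega) (indMap f T y)
      (retTime_iterate_of_lt h' (hN ▸ hlt))
    refine ⟨m + 1, by omega, ?_, fun j hj1 hj2 => ?_⟩
    · rw [iterate_succ_apply, hm]
      exact indMap_iterate_of_lt h' (hN ▸ hlt)
    · obtain rfl | hj := hj1.eq_or_lt
      · exact iterate_notMem_of_lt_retTime (f := f) hr1 (hN ▸ hlt)
      · rw [← Nat.sub_add_cancel hj.le, iterate_add_apply]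
        exact hbefore _ (by omega) (by omega)

lemma returnsTo_indMap (hsub : T' ⊆ T) (h : ReturnsTo f T) (h' : ReturnsTo f T') :
    ReturnsTo (indMap f T) T' := fun y =>
  let ⟨m, hm1, hm, _⟩ := exists_iterate_indMap_eq_indMap hsub h h' y
  ⟨m, hm1, hm ▸ indMap_mem h' y⟩

lemma indMap_indMap (hsub : T' ⊆ T) (h : ReturnsTo f T) (h' : ReturnsTo f T') (y : S) :
    indMap (indMap f T) T' y = indMap f T' y := by
  obtain ⟨m, hm1, hm, hbefore⟩ := exists_iterate_indMap_eq_indMap hsub h h' y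
  rw [indMap, retTime_eq_of_forall_notMem hm1 (hm ▸ indMap_mem h' y) hbefore, hm]

end FirstReturn

section Slices

variable {S : Type*} {f : S → S} {A : ℕ → Set S} {n : ℕ}

lemma indMap_tMap (hsub : A (n + 1) ⊆ A n) (hn : ReturnsTo f (A n))
    (hn1 : ReturnsTo f (A (n + 1))) (y : S) :
    indMap f (A n) (tMap f A n y) = indMap f (A (n + 1)) y := by
  rw [tMap, apply_iterate_pred_retTime (returnsTo_indMap hsub hn hn1),
    indMap_indMap hsub hn hn1]

lemma image_tMap_eq (hf : Injective f) (hsub : A (n + 1) ⊆ A n) (hn : ReturnsTo f (A n))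
    (hn1 : ReturnsTo f (A (n + 1)))
    (hsurj : SurjOn (indMap f (A (n + 1))) (A (n + 1)) (A (n + 1)))
    {B : Set S} (hB : B ⊆ A (n + 1)) :
    tMap f A n '' {y ∈ A (n + 1) | indMap f (A (n + 1)) y ∈ B} =
      {z ∈ A n | indMap f (A n) z ∈ B} := by
  have htmem : ∀ y ∈ A (n + 1), tMap f A n y ∈ A n := fun y hy =>
    iterate_indMap_mem hn (hsub hy) _
  ext z
  constructor
  · rintro ⟨y, ⟨hy, hyB⟩, rfl⟩
    exact ⟨htmem y hy, (indMap_tMap hsub hn hn1 y).symm ▸ hyB⟩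
  · rintro ⟨hz, hzB⟩
    obtain ⟨y, hy, hyz⟩ := hsurj (hB hzB)
    refine ⟨y, ⟨hy, hyz ▸ hzB⟩, indMap_injOn hf hn (htmem y hy) hz ?_⟩
    rw [indMap_tMap hsub hn hn1, hyz]

end Slices

section Minimal

variable {S : Type*} [TopologicalSpace S] {Φ : S ≃ₜ S}

lemma Homeomorph.IsMinimal.symm (hmin : Φ.IsMinimal) : Φ.symm.IsMinimal := fun x =>
  (hmin x).mono <| by
    rintro _ ⟨n, hy⟩
    exact ⟨n, by simpa only [Homeomorph.symm_symm, or_comm] using hy⟩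

lemma Homeomorph.IsMinimal.exists_bound [CompactSpace S] (hmin : Φ.IsMinimal) {T : Set S}
    (hT : IsOpen T) (hne : T.Nonempty) :
    ∃ N, ∀ x, ∃ m ≤ N, Φ^[m] x ∈ T ∨ Φ.symm^[m] x ∈ T := by
  have hcov : univ ⊆ ⋃ m : ℕ, Φ^[m] ⁻¹' T ∪ Φ.symm^[m] ⁻¹' T := fun x _ => by
    obtain ⟨z, ⟨m, rfl | rfl⟩, hzT⟩ := (hmin x).exists_mem_open hT hne
    exacts [mem_iUnion.2 ⟨m, Or.inl hzT⟩, mem_iUnion.2 ⟨m, Or.inr hzT⟩]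
  obtain ⟨s, hs⟩ := isCompact_univ.elim_finite_subcover _
    (fun m => (hT.preimage (Φ.continuous.iterate m)).union
      (hT.preimage (Φ.symm.continuous.iterate m))) hcov
  refine ⟨s.sup id, fun x => ?_⟩
  obtain ⟨m, hms, hm⟩ := mem_iUnion₂.1 (hs (mem_univ x))
  exact ⟨m, Finset.le_sup (f := id) hms, hm⟩

lemma Homeomorph.IsMinimal.returnsTo [CompactSpace S] (hmin : Φ.IsMinimal) {T : Set S}
    (hT : IsOpen T) (hne : T.Nonempty) : ReturnsTo Φ T := fun y => by
  obtain ⟨N, hN⟩ := hmin.exists_bound hT hne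
  obtain ⟨m, hmN, hm | hm⟩ := hN (Φ^[N + 1] y)
  · exact ⟨m + (N + 1), by omega, by rwa [iterate_add_apply]⟩
  · refine ⟨N + 1 - m, by omega, ?_⟩
    rwa [← Nat.add_sub_cancel' (show m ≤ N + 1 by omega), iterate_add_apply,
      LeftInverse.iterate Φ.symm_apply_apply] at hm

end Minimal

theorem tComp_image_eq_general {S : Type*} [TopologicalSpace S] [CompactSpace S]
    (Φ : S ≃ₜ S) (hmin : Φ.IsMinimal)
    (A : ℕ → Set S)
    (hnested : ∀ n : ℕ, A (n + 1) ⊆ A n)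
    (hclopen : ∀ n : ℕ, IsClopen (A n)) (hne : ∀ n : ℕ, (A n).Nonempty) :
    ∀ n k : ℕ,
      tComp (⇑Φ) A n k '' {y ∈ A (n + k + 1) | indMap (⇑Φ) (A (n + k + 1)) y ∈ A (n + k + 2)}
        = {z ∈ A n | indMap (⇑Φ) (A n) z ∈ A (n + k + 2)} := by
  have hret : ∀ n, ReturnsTo Φ (A n) := fun n => hmin.returnsTo (hclopen n).isOpen (hne n)
  have hstep : ∀ n, ∀ B ⊆ A (n + 1), tMap Φ A n '' {y ∈ A (n + 1) | indMap Φ (A (n + 1)) y ∈ B} =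
      {z ∈ A n | indMap Φ (A n) z ∈ B} := fun n _ hB =>
    image_tMap_eq Φ.injective (hnested n) (hret n) (hret (n + 1))
      (surjOn_indMap Φ.apply_symm_apply
        (hmin.symm.returnsTo (hclopen (n + 1)).isOpen (hne (n + 1)))) hB
  intro n k
  induction k generalizing n with
  | zero => exact hstep n _ (hnested _)
  | succ k ih =>
    rw [show n + (k + 1) = n + 1 + k by omega, tComp, image_comp, ih]
    exact hstep n _ (antitone_nat_of_succ_le hnested (by omega))

/-- Lemma `lemt`: `t_n ∘ ⋯ ∘ t_{n+k}(Φ_{n+k+1}⁻¹(S_{n+k+2})) = Φ_n⁻¹(S_{n+k+2})`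
(as subsets of the respective slices). -/
theorem tComp_image_eq {S : Type*} [TopologicalSpace S] [CompactSpace S]
    [TopologicalSpace.MetrizableSpace S] [TotallyDisconnectedSpace S] [Nonempty S]
    [PerfectSpace S]
    (Φ : S ≃ₜ S) (hmin : Φ.IsMinimal)
    (A : ℕ → Set S) (hA0 : A 0 = Set.univ)
    (hnested : ∀ n : ℕ, A (n + 1) ⊆ A n)
    (hclopen : ∀ n : ℕ, IsClopen (A n)) (hne : ∀ n : ℕ, (A n).Nonempty) :
    ∀ n k : ℕ,
      tComp (⇑Φ) A n k '' {y ∈ A (n + k + 1) | indMap (⇑Φ) (A (n + k + 1)) y ∈ A (n + k + 2)}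
        = {z ∈ A n | indMap (⇑Φ) (A n) z ∈ A (n + k + 2)} :=
  tComp_image_eq_general Φ hmin A hnested hclopen hne
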